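/- There is a universal constant c > 0 such that for any probability distribution μ on a finite set V with |V| ≥ 2, d(μ, U) ≥ (c / log|V|) · ENT(μ), where U is the uniform distribution on V. -/

import Mathlib

/-- For `p, q ≥ 0`, the quantity
`d(p,q) = (1/2) p log p + (1/2) q log q − ((p+q)/2) log((p+q)/2)`
(with the convention `0 log 0 = 0`, which is automatic since `Real.log 0 = 0`). -/
noncomputable def dPair (p q : ℝ) : ℝ :=
  (1 / 2) * p * Real.log p + (1 / 2) * q * Real.log q
    - ((p + q) / 2) * Real.log ((p + q) / 2)

/-- Relative entropy of a probability distribution on a finite set `V`: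
`ENT(p) = ∑ i, p i * log (|V| * p i)`, with the convention `0 log 0 = 0`. -/
noncomputable def relEnt {V : Type*} [Fintype V] (p : V → ℝ) : ℝ :=
  ∑ i, p i * Real.log ((Fintype.card V : ℝ) * p i)

/-- `x log x − x log m ≥ x − m + (√x − √m)²`. -/
lemma aux_l1 (x m : ℝ) (hx : 0 ≤ x) (hm : 0 < m) :
    x - m + (Real.sqrt x - Real.sqrt m)^2 ≤ x * Real.log x - x * Real.log m := by
  rcases hx.eq_or_lt with h|h
  · rw [← h]
    have := Real.sq_sqrt hm.le
    simp only [Real.sqrt_zero, zero_mul, zero_sub, sub_zero]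
    nlinarith
  · have hsx : 0 < Real.sqrt x := Real.sqrt_pos.2 h
    have hsm : 0 < Real.sqrt m := Real.sqrt_pos.2 hm
    have key : Real.log (Real.sqrt m / Real.sqrt x) ≤ Real.sqrt m / Real.sqrt x - 1 :=
      Real.log_le_sub_one_of_pos (by positivity)
    rw [Real.log_div hsm.ne' hsx.ne'] at key
    have key2 : Real.sqrt x * (Real.log (Real.sqrt m) - Real.log (Real.sqrt x))
        ≤ Real.sqrt m - Real.sqrt x := by
      have h2 := mul_le_mul_of_nonneg_left key hsx.le
      have h3 : Real.sqrt x * (Real.sqrt m / Real.sqrt x - 1)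
          = Real.sqrt m - Real.sqrt x := by field_simp
      linarith
    have lx : Real.log x = 2 * Real.log (Real.sqrt x) := by
      rw [Real.log_sqrt h.le]; ring
    have lm : Real.log m = 2 * Real.log (Real.sqrt m) := by
      rw [Real.log_sqrt hm.le]; ring
    have e1 : Real.sqrt x ^ 2 = x := Real.sq_sqrt h.le
    have e2 : Real.sqrt m ^ 2 = m := Real.sq_sqrt hm.le
    rw [lx, lm]
    nlinarith [mul_le_mul_of_nonneg_left key2 (by positivity : (0:ℝ) ≤ 2 * Real.sqrt x)]

/-- `dPair p q ≥ (√p − √q)²/4`. -/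
lemma aux_l2 (p q : ℝ) (hp : 0 ≤ p) (hq : 0 < q) :
    (Real.sqrt p - Real.sqrt q)^2 / 4 ≤ dPair p q := by
  have hm : 0 < (p + q) / 2 := by linarith
  have h1 := aux_l1 p ((p + q) / 2) hp hm
  have h2 := aux_l1 q ((p + q) / 2) hq.le hm
  unfold dPair
  nlinarith [sq_nonneg (Real.sqrt p + Real.sqrt q - 2 * Real.sqrt ((p + q) / 2))]

/-- `√y (x log(x/y) − x + y) ≤ (√x − √y)² (2√x + √y)`. -/
lemma aux_l3 (x y : ℝ) (hx : 0 ≤ x) (hy : 0 < y) :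
    Real.sqrt y * (x * Real.log x - x * Real.log y - x + y)
      ≤ (Real.sqrt x - Real.sqrt y)^2 * (2 * Real.sqrt x + Real.sqrt y) := by
  rcases hx.eq_or_lt with h|h
  · have e2 : Real.sqrt y ^ 2 = y := Real.sq_sqrt hy.le
    have heq : (Real.sqrt 0 - Real.sqrt y)^2 * (2 * Real.sqrt 0 + Real.sqrt y)
        = Real.sqrt y * (0 * Real.log 0 - 0 * Real.log y - 0 + y) := by
      rw [Real.sqrt_zero]
      linear_combination Real.sqrt y * e2
    rw [← h]
    exact le_of_eq heq.symm
  · have hsx : 0 < Real.sqrt x := Real.sqrt_pos.2 h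
    have hsy : 0 < Real.sqrt y := Real.sqrt_pos.2 hy
    have key : Real.log (Real.sqrt x / Real.sqrt y) ≤ Real.sqrt x / Real.sqrt y - 1 :=
      Real.log_le_sub_one_of_pos (by positivity)
    rw [Real.log_div hsx.ne' hsy.ne'] at key
    have key2 : Real.sqrt y * (Real.log (Real.sqrt x) - Real.log (Real.sqrt y))
        ≤ Real.sqrt x - Real.sqrt y := by
      have h2 := mul_le_mul_of_nonneg_left key hsy.le
      have h3 : Real.sqrt y * (Real.sqrt x / Real.sqrt y - 1)
          = Real.sqrt x - Real.sqrt y := by field_simp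
      linarith
    have lx : Real.log x = 2 * Real.log (Real.sqrt x) := by
      rw [Real.log_sqrt h.le]; ring
    have ly : Real.log y = 2 * Real.log (Real.sqrt y) := by
      rw [Real.log_sqrt hy.le]; ring
    have e1 : Real.sqrt x ^ 2 = x := Real.sq_sqrt h.le
    have e2 : Real.sqrt y ^ 2 = y := Real.sq_sqrt hy.le
    rw [lx, ly]
    nlinarith [mul_le_mul_of_nonneg_left key2 (by positivity : (0:ℝ) ≤ 2 * x)]

/-- Nonnegativity of the entropy terms. -/
lemma aux_l4 (x y : ℝ) (hx : 0 ≤ x) (hy : 0 < y) :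
    0 ≤ x * Real.log x - x * Real.log y - x + y := by
  have h1 := aux_l1 x y hx hy
  nlinarith [sq_nonneg (Real.sqrt x - Real.sqrt y)]

/-- The pointwise inequality with `c = 1/30`. -/
lemma aux_pointwise (n p : ℝ) (hn : 2 ≤ n) (hp : 0 ≤ p) (hp1 : p ≤ 1) :
    (1/30) / Real.log n * (p * Real.log p - p * Real.log n⁻¹ - p + n⁻¹)
      ≤ dPair p n⁻¹ := by
  have hn0 : (0:ℝ) < n := by linarith
  have hu : (0:ℝ) < n⁻¹ := by positivity
  have hL2 : (0.6931471803 : ℝ) < Real.log 2 := Real.log_two_gt_d9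
  have hL : Real.log 2 ≤ Real.log n := Real.log_le_log (by norm_num) hn
  have hLpos : (0:ℝ) < Real.log n := by linarith
  have hg : 0 ≤ p * Real.log p - p * Real.log n⁻¹ - p + n⁻¹ := aux_l4 p n⁻¹ hp hu
  have hdp := aux_l2 p n⁻¹ hp hu
  have hsu : 0 < Real.sqrt n⁻¹ := Real.sqrt_pos.2 hu
  have hsqrt4 : Real.sqrt (4 * n⁻¹) = 2 * Real.sqrt n⁻¹ := by
    rw [show (4:ℝ) = 2^2 by norm_num, Real.sqrt_mul (by positivity), Real.sqrt_sq (by norm_num)]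
  by_cases hcase : p ≤ 4 * n⁻¹
  · -- small p regime
    have hsp : Real.sqrt p ≤ 2 * Real.sqrt n⁻¹ := by
      rw [← hsqrt4]; exact Real.sqrt_le_sqrt hcase
    have h3 := aux_l3 p n⁻¹ hp hu
    have h5 : Real.sqrt n⁻¹ * (p * Real.log p - p * Real.log n⁻¹ - p + n⁻¹)
        ≤ Real.sqrt n⁻¹ * (5 * (Real.sqrt p - Real.sqrt n⁻¹)^2) := by
      nlinarith [sq_nonneg (Real.sqrt p - Real.sqrt n⁻¹)]
    have hg5 : p * Real.log p - p * Real.log n⁻¹ - p + n⁻¹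
        ≤ 5 * (Real.sqrt p - Real.sqrt n⁻¹)^2 :=
      le_of_mul_le_mul_left h5 hsu
    have hc : (1/30) / Real.log n ≤ 1/20 := by
      rw [div_le_iff₀ hLpos]; linarith
    calc (1/30) / Real.log n * (p * Real.log p - p * Real.log n⁻¹ - p + n⁻¹)
        ≤ (1/20) * (p * Real.log p - p * Real.log n⁻¹ - p + n⁻¹) :=
          mul_le_mul_of_nonneg_right hc hg
      _ ≤ (1/20) * (5 * (Real.sqrt p - Real.sqrt n⁻¹)^2) := by linarith
      _ = (Real.sqrt p - Real.sqrt n⁻¹)^2 / 4 := by ring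
      _ ≤ dPair p n⁻¹ := hdp
  · -- large p regime
    push_neg at hcase
    have hppos : 0 < p := by linarith
    have hlogp : Real.log p ≤ 0 := Real.log_nonpos hp hp1
    have hlogu : Real.log n⁻¹ = - Real.log n := Real.log_inv n
    have hgle : p * Real.log p - p * Real.log n⁻¹ - p + n⁻¹ ≤ p * Real.log n := by
      have : p * Real.log p ≤ 0 := mul_nonpos_of_nonneg_of_nonpos hp hlogp
      rw [hlogu]
      nlinarith
    have hsub : Real.sqrt n⁻¹ ≤ Real.sqrt p / 2 := by
      have : 2 * Real.sqrt n⁻¹ ≤ Real.sqrt p := by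
        rw [← hsqrt4]; exact Real.sqrt_le_sqrt (by linarith)
      linarith
    have hsp2 : Real.sqrt p ^ 2 = p := Real.sq_sqrt hp
    have hD : p / 4 ≤ (Real.sqrt p - Real.sqrt n⁻¹)^2 := by
      nlinarith [Real.sqrt_nonneg p, Real.sqrt_nonneg (n⁻¹ : ℝ)]
    have hmain : (1/30) / Real.log n * (p * Real.log p - p * Real.log n⁻¹ - p + n⁻¹)
        ≤ p / 30 := by
      have h1 : (1/30) / Real.log n * (p * Real.log p - p * Real.log n⁻¹ - p + n⁻¹)
          ≤ (1/30) / Real.log n * (p * Real.log n) :=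
        mul_le_mul_of_nonneg_left hgle (by positivity)
      have h2 : (1/30) / Real.log n * (p * Real.log n) = p / 30 := by
        field_simp
      linarith
    linarith

/-- There is a universal constant `c > 0` such that for every probability distribution `μ`
on a finite set `V` with `|V| ≥ 2`, `d(μ, U) ≥ (c / log |V|) · ENT(μ)`, where `U` is the
uniform distribution on `V` and `d(μ, U) = ∑ i, d(μ i, 1/|V|)`. -/
theorem dPair_uniform_ge_relEnt :
    ∃ c : ℝ, 0 < c ∧
      ∀ (V : Type) [Fintype V], 2 ≤ Fintype.card V →
        ∀ μ : V → ℝ, (∀ i, 0 ≤ μ i) → ∑ i, μ i = 1 →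
          (c / Real.log (Fintype.card V)) * relEnt μ
            ≤ ∑ i, dPair (μ i) ((Fintype.card V : ℝ)⁻¹) := by
  refine ⟨1/30, by norm_num, ?_⟩
  intro V _ hcard μ hμ0 hμ1
  set n : ℝ := (Fintype.card V : ℝ) with hn_def
  have hn : (2:ℝ) ≤ n := by rw [hn_def]; exact_mod_cast hcard
  have hn0 : (0:ℝ) < n := by linarith
  have hμ1' : ∀ i, μ i ≤ 1 := by
    intro i
    have := Finset.single_le_sum (fun j _ => hμ0 j) (Finset.mem_univ i)
    rw [hμ1] at this; exact this
  have key : ∀ i, (1/30) / Real.log n * (μ i * Real.log (μ i) - μ i * Real.log n⁻¹ - μ i + n⁻¹)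
      ≤ dPair (μ i) n⁻¹ := fun i => aux_pointwise n (μ i) hn (hμ0 i) (hμ1' i)
  have hsum := Finset.sum_le_sum (fun i (_ : i ∈ Finset.univ) => key i)
  have hterm : ∀ i, μ i * Real.log (n * μ i) = μ i * Real.log (μ i) - μ i * Real.log n⁻¹ := by
    intro i
    rcases (hμ0 i).eq_or_lt with h|h
    · rw [← h]; ring
    · rw [Real.log_mul hn0.ne' h.ne', Real.log_inv]; ring
  have hrel : relEnt μ = ∑ i, μ i * Real.log (n * μ i) := by
    unfold relEnt; rw [hn_def]
  have hEnt : ∑ i, (μ i * Real.log (μ i) - μ i * Real.log n⁻¹ - μ i + n⁻¹) = relEnt μ := by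
    have hc : ∀ i ∈ Finset.univ, (μ i * Real.log (μ i) - μ i * Real.log n⁻¹ - μ i + n⁻¹)
        = μ i * Real.log (n * μ i) - μ i + n⁻¹ := fun i _ => by rw [← hterm i]
    rw [Finset.sum_congr rfl hc, Finset.sum_add_distrib, Finset.sum_sub_distrib, hμ1,
      Finset.sum_const, Finset.card_univ, nsmul_eq_mul, hrel]
    have h2 : (Fintype.card V : ℝ) * n⁻¹ = 1 := by
      rw [← hn_def]; exact mul_inv_cancel₀ hn0.ne'
    rw [h2]; ring
  calc (1/30 : ℝ) / Real.log n * relEnt μ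
      = ∑ i, (1/30) / Real.log n * (μ i * Real.log (μ i) - μ i * Real.log n⁻¹ - μ i + n⁻¹) := by
        rw [← Finset.mul_sum, hEnt]
    _ ≤ ∑ i, dPair (μ i) n⁻¹ := hsum
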